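/- In the execution of Algorithm lineon on any request sequence R, for every node v and every time t, at most one level l ∈ {0,…,log₂ m} satisfies ⟨I_v^l,t⟩ ∈ COMMIT; that is, at any single time at most one interval containing v commits. -/

import Mathlib

open Finset

/-! ## The time-line grid of a line network -/

/-- Grid edges of the time-line graph of the line network:
`h v t` is the undirected horizontal edge `{(v,t),(v+1,t)}`,
`a v t` is the arc `((v,t),(v,t+1))` directed forward in time. -/
inductive GEdge : Type
  | h (v t : ℕ) : GEdge
  | a (v t : ℕ) : GEdge
deriving DecidableEq

/-- Distance between two nodes of the line network. -/
def natdist (a b : ℕ) : ℕ := max a b - min a b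

/-- The (replica) endpoints of a grid edge. -/
def eVerts : GEdge → Finset (ℕ × ℕ)
  | .h v t => {(v, t), (v + 1, t)}
  | .a v t => {(v, t), (v, t + 1)}

/-- The replicas that are endpoints of edges of `F`. -/
def verts (F : Finset GEdge) : Finset (ℕ × ℕ) := F.biUnion eVerts

/-- The edge lies inside the grid of the line network `L(n)` (nodes `1,…,n`). -/
def eInGrid (n : ℕ) : GEdge → Prop
  | .h v _ => 1 ≤ v ∧ v + 1 ≤ n
  | .a v _ => 1 ≤ v ∧ v ≤ n

/-- The distance `d((u,s),(v,t)) = (t-s) + |v-u|` if `s ≤ t`, and `∞` otherwise. -/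
def gdist (p q : ℕ × ℕ) : WithTop ℕ :=
  if p.2 ≤ q.2 then ((q.2 - p.2 + natdist p.1 q.1 : ℕ) : WithTop ℕ) else ⊤

/-- One step of a path in a solution: horizontal edges may be traversed in both
directions, arcs only forward in time. -/
inductive GStep (F : Finset GEdge) : ℕ × ℕ → ℕ × ℕ → Prop
  | right {v t : ℕ} : GEdge.h v t ∈ F → GStep F (v, t) (v + 1, t)
  | left {v t : ℕ} : GEdge.h v t ∈ F → GStep F (v + 1, t) (v, t)
  | up {v t : ℕ} : GEdge.a v t ∈ F → GStep F (v, t) (v, t + 1)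

/-- `q` is reachable from `p` in the edge set `F`. -/
def Reaches (F : Finset GEdge) (p q : ℕ × ℕ) : Prop := Relation.ReflTransGen (GStep F) p q

/-- A feasible MCD solution: a set of grid edges spanning all requests from the
origin replica `(r0, 0)`. -/
def Feasible (n r0 : ℕ) (R : List (ℕ × ℕ)) (F : Finset GEdge) : Prop :=
  (∀ e ∈ F, eInGrid n e) ∧ ∀ r ∈ R, Reaches F (r0, 0) r

/-- `|OPT|`, the cost of a minimum-cost feasible solution. -/
noncomputable def optCost (n r0 : ℕ) (R : List (ℕ × ℕ)) : ℕ :=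
  sInf {c : ℕ | ∃ F : Finset GEdge, Feasible n r0 R F ∧ F.card = c}

/-- A valid MCD instance on `L(n)`: the origin and all requested nodes are in
`{1,…,n}` and the request times are nondecreasing. -/
def ValidInstance (n r0 : ℕ) (R : List (ℕ × ℕ)) : Prop :=
  1 ≤ r0 ∧ r0 ≤ n ∧ (∀ r ∈ R, 1 ≤ r.1 ∧ r.1 ≤ n) ∧ List.Chain' (· ≤ ·) (R.map Prod.snd)

/-- The time `t_N` of the last request. -/
def lastT (R : List (ℕ × ℕ)) : ℕ := (R.map Prod.snd).foldr max 0

/-! ## The offline algorithm Triangle of Charikar, Halperin and Motwani -/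

/-- The `i`-th request (junk value `(0,0)` out of range). -/
def req (R : List (ℕ × ℕ)) (i : ℕ) : ℕ × ℕ := R.getD i (0, 0)

/-- The radius `ρ^T_i = d(q_i, r_i)` of the `i`-th request, where `q_i = serve i`
is its serving replica. -/
def triRho (R : List (ℕ × ℕ)) (serve : ℕ → ℕ × ℕ) (i : ℕ) : ℕ :=
  ((req R i).2 - (serve i).2) + natdist (serve i).1 (req R i).1

/-- `Base(i)`: the replicas `(v, t_i)` with `|v - v_i| ≤ ρ^T_i`. -/
def triBase (n : ℕ) (R : List (ℕ × ℕ)) (serve : ℕ → ℕ × ℕ) (i : ℕ) : Finset (ℕ × ℕ) :=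
  ((Finset.Icc 1 n).filter fun v => natdist v (req R i).1 ≤ triRho R serve i).image
    fun v => (v, (req R i).2)

/-- `Base_H(i)`: the horizontal edges joining consecutive replicas of `Base(i)`. -/
def triBaseH (n : ℕ) (R : List (ℕ × ℕ)) (serve : ℕ → ℕ × ℕ) (i : ℕ) : Finset GEdge :=
  ((Finset.Icc 1 n).filter fun v =>
      v + 1 ≤ n ∧ natdist v (req R i).1 ≤ triRho R serve i ∧
        natdist (v + 1) (req R i).1 ≤ triRho R serve i).image
    fun v => GEdge.h v (req R i).2

/-- The arcs of the vertical path from the serving replica `(u_i, s_i)` to `(u_i, t_i)`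
added at step (T3). -/
def triAddA (R : List (ℕ × ℕ)) (serve : ℕ → ℕ × ℕ) (i : ℕ) : Finset GEdge :=
  (Finset.Ico (serve i).2 (req R i).2).image fun τ => GEdge.a (serve i).1 τ

/-- Triangle's solution after handling the first `i` requests. -/
def triSol (R : List (ℕ × ℕ)) (serve : ℕ → ℕ × ℕ) (addH : ℕ → Finset GEdge)
    (i : ℕ) : Finset GEdge :=
  (Finset.range i).biUnion fun j => triAddA R serve j ∪ addH j

/-- The replicas of Triangle's solution after handling the first `i` requests
(initially only the origin replica `(r0,0)`). -/
def triReps (r0 : ℕ) (R : List (ℕ × ℕ)) (serve : ℕ → ℕ × ℕ) (addH : ℕ → Finset GEdge)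
    (i : ℕ) : Finset (ℕ × ℕ) :=
  insert (r0, 0) (verts (triSol R serve addH i))

/-- An execution of Algorithm Triangle on the instance `(n, r0, R)`:
`serve i` is the serving replica `q_i = (u_i, s_i)` of request `r_i` (step (T1)),
chosen in the current solution at minimum distance from `r_i`;
`addH i` is the set of horizontal edges added at step (T4), namely all of
`Base_H(i)` except possibly one edge (the one closing a cycle). -/
structure TriangleExec (n r0 : ℕ) (R : List (ℕ × ℕ)) where
  serve : ℕ → ℕ × ℕ
  addH : ℕ → Finset GEdge
  serve_mem : ∀ i < R.length, serve i ∈ triReps r0 R serve addH i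
  serve_time : ∀ i < R.length, (serve i).2 ≤ (req R i).2
  serve_min : ∀ i < R.length, ∀ q ∈ triReps r0 R serve addH i,
      gdist (serve i) (req R i) ≤ gdist q (req R i)
  addH_spec : ∀ i < R.length, ∃ E : Finset GEdge,
      E.card ≤ 1 ∧ addH i = triBaseH n R serve i \ E
  base_conn : ∀ i < R.length, ∀ p ∈ triBase n R serve i,
      Reaches (triSol R serve addH (i + 1)) (r0, 0) p
  addH_tail : ∀ i, R.length ≤ i → addH i = ∅

/-- `H^T`: the horizontal edges of Triangle's final solution. -/
def triHT (R : List (ℕ × ℕ)) (addH : ℕ → Finset GEdge) : Finset GEdge :=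
  (Finset.range R.length).biUnion addH

/-- `A^T`: the arcs of Triangle's final solution. -/
def triAT (R : List (ℕ × ℕ)) (serve : ℕ → ℕ × ℕ) : Finset GEdge :=
  (Finset.range R.length).biUnion (triAddA R serve)

/-- `Base = ∪ᵢ Base(i)`: all base replicas. -/
def triBaseAll (n : ℕ) (R : List (ℕ × ℕ)) (serve : ℕ → ℕ × ℕ) : Finset (ℕ × ℕ) :=
  (Finset.range R.length).biUnion (triBase n R serve)

/-! ## Algorithm lineon -/

/-- An interval of the hierarchical partition, encoded as `(level, index)`:
`(l, j)` denotes `I^l_j = {Δ(j-1)·2^l + 1, …, Δ·j·2^l}`. -/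
abbrev Ivl := ℕ × ℕ

/-- The nodes of the interval `I = (l, j)`. -/
def ivlNodes (Δ : ℕ) (I : Ivl) : Finset ℕ :=
  Finset.Icc (Δ * (I.2 - 1) * 2 ^ I.1 + 1) (Δ * I.2 * 2 ^ I.1)

/-- `I = (l, j)` is a genuine interval of the partition of `{1,…,n}`,
where `n = Δ · 2^k`: its level is at most `log₂ m = k` and
`1 ≤ j ≤ m / 2^l = 2^(k-l)`. -/
def validIvl (Δ k : ℕ) (I : Ivl) : Prop :=
  I.1 ≤ k ∧ 1 ≤ I.2 ∧ I.2 ≤ 2 ^ (k - I.1)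

/-- The nodes of the neighborhood `N(I) = NL(I) ∪ I ∪ NR(I)` of interval `I`. -/
def nbhdNodes (n Δ : ℕ) (I : Ivl) : Finset ℕ :=
  Finset.Icc (Δ * (I.2 - 2) * 2 ^ I.1 + 1) (min n (Δ * (I.2 + 1) * 2 ^ I.1))

/-- The nodes having a base replica at time `t` (`Base[t]`, as nodes). -/
def baseNodesAt (n : ℕ) (R : List (ℕ × ℕ)) (serve : ℕ → ℕ × ℕ) (t : ℕ) : Finset ℕ :=
  ((triBaseAll n R serve).filter fun p => p.2 = t).image Prod.fst

/-- `I` is active at time `t`: `Base ∩ I[t - 2^{l(I)}, t] ≠ ∅`. -/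
def activeAt (n Δ : ℕ) (R : List (ℕ × ℕ)) (serve : ℕ → ℕ × ℕ) (I : Ivl) (t : ℕ) : Prop :=
  ∃ p ∈ triBaseAll n R serve, p.1 ∈ ivlNodes Δ I ∧ p.2 ≤ t ∧ t ≤ p.2 + 2 ^ I.1

/-- `I` is stay-active at time `t`: `Base ∩ I[t - 2^{l(I)} + 1, t] ≠ ∅`. -/
def stayActiveAt (n Δ : ℕ) (R : List (ℕ × ℕ)) (serve : ℕ → ℕ × ℕ) (I : Ivl) (t : ℕ) : Prop :=
  ∃ p ∈ triBaseAll n R serve, p.1 ∈ ivlNodes Δ I ∧ p.2 ≤ t ∧ t < p.2 + 2 ^ I.1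

/-- `C_t`: the nodes storing a copy at time `t`.  `C_0 = {r0}`, and `C_{t+1}`
consists of the origin together with the nodes selected (by `sel`) for the
commitments made at time `t` (listed, in processing order, in `commitList t`). -/
def lineC (r0 : ℕ) (commitList : ℕ → List Ivl) (sel : ℕ → Ivl → ℕ) : ℕ → Finset ℕ
  | 0 => {r0}
  | t + 1 => insert r0 ((commitList t).map (sel t)).toFinset

/-- The nodes to which the delivery phase for request `r_j` delivers a copy:
the horizontal path from `q^on_j` to `r_j` together with the nodes of `Base(j)`. -/
def servedNodes (n : ℕ) (R : List (ℕ × ℕ)) (serve : ℕ → ℕ × ℕ) (qon : ℕ → ℕ)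
    (j : ℕ) : Finset ℕ :=
  Finset.Icc (min (qon j) (req R j).1) (max (qon j) (req R j).1) ∪
    (triBase n R serve j).image Prod.fst

/-- The nodes whose time-`t_i` replica is in lineon's solution when request `r_i`
arrives: the caches `C_{t_i}` together with everything delivered for earlier
requests of the same time. -/
def availNodes (n r0 : ℕ) (R : List (ℕ × ℕ)) (serve : ℕ → ℕ × ℕ)
    (commitList : ℕ → List Ivl) (sel : ℕ → Ivl → ℕ) (qon : ℕ → ℕ) (i : ℕ) : Finset ℕ :=
  lineC r0 commitList sel (req R i).2 ∪
    (Finset.range i).biUnion fun j =>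
      if (req R j).2 = (req R i).2 then servedNodes n R serve qon j else ∅

/-- An execution of Algorithm lineon with parameter `Δ` (where `n = Δ · 2^k`) on the
instance `(n, r0, R)`.  It simulates Triangle (`tri`); `commitList t` is the list of
intervals committing at time `t`, in the order processed by the storage phase
(levels in increasing order); `sel t I` is the node selected for the commitment
`⟨I,t⟩` in step (S1.2); `qon i` is the node of the serving replica `q^on_i` of
request `r_i` chosen in the delivery phase (step (D1)). -/
structure LineonExec (n Δ k r0 : ℕ) (R : List (ℕ × ℕ)) where
  tri : TriangleExec n r0 R
  hn : n = Δ * 2 ^ k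
  commitList : ℕ → List Ivl
  sel : ℕ → Ivl → ℕ
  qon : ℕ → ℕ
  commit_valid : ∀ t, ∀ I ∈ commitList t, validIvl Δ k I
  commit_nodup : ∀ t, (commitList t).Nodup
  commit_sorted : ∀ t, ((commitList t).map Prod.fst).Pairwise (· ≤ ·)
  commit_stay : ∀ t, ∀ I ∈ commitList t, stayActiveAt n Δ R tri.serve I t
  commit_fresh : ∀ t l₁ I l₂, commitList t = l₁ ++ I :: l₂ →
      ∀ v ∈ nbhdNodes n Δ I, v ≠ r0 ∧ v ∉ l₁.map (sel t)
  commit_tail : ∀ t, lastT R < t → commitList t = []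
  sel_nbhd : ∀ t, ∀ I ∈ commitList t, sel t I ∈ nbhdNodes n Δ I
  sel_src : ∀ t, ∀ I ∈ commitList t,
      sel t I ∈ baseNodesAt n R tri.serve t ∨ sel t I ∈ lineC r0 commitList sel t
  loop_done : ∀ t ≤ lastT R, ∀ I, validIvl Δ k I → stayActiveAt n Δ R tri.serve I t →
      ∃ v ∈ nbhdNodes n Δ I, v ∈ lineC r0 commitList sel (t + 1)
  qon_mem : ∀ i < R.length, qon i ∈ availNodes n r0 R tri.serve commitList sel qon i
  qon_min : ∀ i < R.length, ∀ w ∈ availNodes n r0 R tri.serve commitList sel qon i,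
      natdist (qon i) (req R i).1 ≤ natdist w (req R i).1

/-- The online radius `ρ^on_i = d(q^on_i, r_i)`. -/
def lineRon (R : List (ℕ × ℕ)) (qon : ℕ → ℕ) (i : ℕ) : ℕ := natdist (qon i) (req R i).1

/-- `H^on`: the horizontal edges of lineon's final solution. -/
def lineHon (n : ℕ) (R : List (ℕ × ℕ)) (serve : ℕ → ℕ × ℕ) (qon : ℕ → ℕ) : Finset GEdge :=
  (Finset.range R.length).biUnion fun i =>
    (Finset.Ico (min (qon i) (req R i).1) (max (qon i) (req R i).1)).image
        (fun v => GEdge.h v (req R i).2) ∪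
      triBaseH n R serve i

/-- `A^on`: the arcs of lineon's final solution, i.e. the arcs `((v,t),(v,t+1))`
with `(v,t+1) ∈ C_{t+1}`. -/
def lineAon (r0 : ℕ) (R : List (ℕ × ℕ)) (commitList : ℕ → List Ivl)
    (sel : ℕ → Ivl → ℕ) : Finset GEdge :=
  (Finset.range (lastT R)).biUnion fun t =>
    (lineC r0 commitList sel (t + 1)).image fun v => GEdge.a v t

/-- `COMMIT`, as a finite set of pairs `⟨I, t⟩`. -/
def commitSet (R : List (ℕ × ℕ)) (commitList : ℕ → List Ivl) : Finset (Ivl × ℕ) :=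
  (Finset.range (lastT R + 1)).biUnion fun t =>
    (commitList t).toFinset.image fun I => (I, t)

/-- The level-`l` interval `I_v^l` containing node `v`. -/
def ivlOf (Δ l v : ℕ) : Ivl := (l, (v - 1) / (Δ * 2 ^ l) + 1)

lemma mem_commitList_of_commitSet {R : List (ℕ × ℕ)} {cl : ℕ → List Ivl} {I : Ivl} {t : ℕ}
    (h : (I, t) ∈ commitSet R cl) : I ∈ cl t := by
  unfold commitSet at h
  rw [Finset.mem_biUnion] at h
  obtain ⟨t', _, h⟩ := h
  rw [Finset.mem_image] at h
  obtain ⟨I', hI', hEq⟩ := h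
  obtain ⟨rfl, rfl⟩ := Prod.mk.injEq .. ▸ hEq
  exact List.mem_toFinset.mp hI'

lemma div_sub_mul_le (q s : ℕ) (hs : 0 < s) : (q / s - 1) * s ≤ q - 1 := by
  have h1 : q / s * s ≤ q := Nat.div_mul_le_self q s
  rcases Nat.eq_zero_or_pos (q / s) with h | h
  · simp [h]
  · rw [Nat.sub_mul, one_mul]
    omega

lemma le_div_add_mul (q s : ℕ) (hs : 0 < s) : q + 2 ≤ (q / s + 2) * s := by
  have h2 : q < (q / s + 1) * s := (Nat.div_lt_iff_lt_mul hs).mp (Nat.lt_succ_self _)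
  rw [add_mul] at h2 ⊢
  have h3 : q / s * s + 2 * s ≥ q / s * s + s + 1 := by omega
  omega

lemma nbhd_mono (n Δ : ℕ) (v : ℕ) {l l' : ℕ} (hll' : l ≤ l') :
    nbhdNodes n Δ (ivlOf Δ l v) ⊆ nbhdNodes n Δ (ivlOf Δ l' v) := by
  rcases Nat.eq_zero_or_pos Δ with rfl | hΔ
  · intro x hx
    simp [nbhdNodes, ivlOf] at hx
  set s := 2 ^ (l' - l) with hsdef
  have hs : 0 < s := Nat.pow_pos (by norm_num)
  have hpow : (2 : ℕ) ^ l' = 2 ^ l * s := by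
    rw [hsdef, ← pow_add]
    congr 1
    omega
  set q : ℕ := (v - 1) / (Δ * 2 ^ l) with hq
  have hq' : (v - 1) / (Δ * 2 ^ l') = q / s := by
    rw [hpow, ← mul_assoc, Nat.div_div_eq_div_mul]
  intro x hx
  unfold nbhdNodes ivlOf at hx ⊢
  simp only [Finset.mem_Icc] at hx ⊢
  rw [← hq] at hx
  rw [hq']
  have hA : Δ * (q / s + 1 - 2) * 2 ^ l' ≤ Δ * (q + 1 - 2) * 2 ^ l := by
    have : q / s + 1 - 2 = q / s - 1 := by omega
    rw [this, hpow]
    have hq1 : q + 1 - 2 = q - 1 := by omega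
    rw [hq1]
    calc Δ * (q / s - 1) * (2 ^ l * s) = Δ * 2 ^ l * ((q / s - 1) * s) := by ring
      _ ≤ Δ * 2 ^ l * (q - 1) := Nat.mul_le_mul_left _ (div_sub_mul_le q s hs)
      _ = Δ * (q - 1) * 2 ^ l := by ring
  have hB : Δ * (q + 1 + 1) * 2 ^ l ≤ Δ * (q / s + 1 + 1) * 2 ^ l' := by
    rw [hpow]
    calc Δ * (q + 1 + 1) * 2 ^ l = Δ * 2 ^ l * (q + 2) := by ring
      _ ≤ Δ * 2 ^ l * ((q / s + 2) * s) := Nat.mul_le_mul_left _ (le_div_add_mul q s hs)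
      _ = Δ * (q / s + 1 + 1) * (2 ^ l * s) := by ring
  refine ⟨le_trans (by omega) hx.1, le_trans hx.2 ?_⟩
  exact min_le_min le_rfl hB

lemma sorted_split {α : Type*} (f : α → ℕ) (L : List α) (hs : (L.map f).Pairwise (· ≤ ·))
    {a b : α} (ha : a ∈ L) (hb : b ∈ L) (hfa : f a < f b) :
    ∃ l₁ l₂, L = l₁ ++ b :: l₂ ∧ a ∈ l₁ := by
  induction L with
  | nil => cases ha
  | cons c L ih =>
    rw [List.map_cons, List.pairwise_cons] at hs
    by_cases hbc : b = c
    · subst hbc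
      have ha' : a ∈ L := by
        rcases List.mem_cons.mp ha with rfl | h
        · omega
        · exact h
      have : f b ≤ f a := hs.1 _ (List.mem_map_of_mem (f := f) ha')
      omega
    · have hb' : b ∈ L := by
        rcases List.mem_cons.mp hb with rfl | h
        · exact absurd rfl hbc
        · exact h
      by_cases hac : a = c
      · obtain ⟨u, w, huw⟩ := List.append_of_mem hb'
        exact ⟨c :: u, w, by rw [huw]; rfl, by rw [hac]; exact List.mem_cons_self⟩
      · have ha' : a ∈ L := by
          rcases List.mem_cons.mp ha with rfl | h
          · exact absurd rfl hac
          · exact h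
        obtain ⟨l₁, l₂, h, hm⟩ := ih hs.2 ha' hb'
        exact ⟨c :: l₁, l₂, by rw [h]; rfl, List.mem_cons_of_mem _ hm⟩

lemma commit_key (n Δ k r0 : ℕ) (R : List (ℕ × ℕ)) (e : LineonExec n Δ k r0 R)
    (v t : ℕ) {l l' : ℕ} (hll' : l < l')
    (hI : ivlOf Δ l v ∈ e.commitList t) (hI' : ivlOf Δ l' v ∈ e.commitList t) : False := by
  obtain ⟨l₁, l₂, hsplit, hmem⟩ :=
    sorted_split Prod.fst (e.commitList t) (e.commit_sorted t) hI hI'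
      (by simp [ivlOf]; omega)
  have hsel : e.sel t (ivlOf Δ l v) ∈ nbhdNodes n Δ (ivlOf Δ l' v) :=
    nbhd_mono n Δ v (le_of_lt hll') (e.sel_nbhd t _ hI)
  have hfresh := (e.commit_fresh t l₁ _ l₂ hsplit _ hsel).2
  exact hfresh (List.mem_map_of_mem (f := e.sel t) hmem)

/-- For every node `v` and every time `t`, at most one level
`l ∈ {0,…,log₂ m}` satisfies `⟨I_v^l, t⟩ ∈ COMMIT`: at any single time, at most
one interval containing `v` commits. -/
theorem lineon_one_containing_interval_commits (n Δ k r0 : ℕ) (R : List (ℕ × ℕ))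
    (hV : ValidInstance n r0 R) (hΔ : 1 ≤ Δ) (e : LineonExec n Δ k r0 R)
    (v t : ℕ) (hv : 1 ≤ v) (hvn : v ≤ n) (l l' : ℕ) (hl : l ≤ k) (hl' : l' ≤ k)
    (h1 : (ivlOf Δ l v, t) ∈ commitSet R e.commitList)
    (h2 : (ivlOf Δ l' v, t) ∈ commitSet R e.commitList) :
    l = l' := by
  have hI := mem_commitList_of_commitSet h1
  have hI' := mem_commitList_of_commitSet h2
  rcases lt_trichotomy l l' with h | h | h
  · exact absurd (commit_key n Δ k r0 R e v t h hI hI') id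
  · exact h
  · exact absurd (commit_key n Δ k r0 R e v t h hI' hI) id
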